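/- If a formula φ is E′-valid, then there exist atoms p₁, …, pₙ occurring in φ such that the formula ((¬¬p₁ → p₁) ∧ … ∧ (¬¬pₙ → pₙ)) → φ is intuitionistically valid. -/

import Mathlib

/- Formalization of Lorenzen dialogue games, following Felscher's presentation.

   Propositional formulas are built from atoms using ¬, ∧, ∨, →.  A dialogue
   for a formula φ is a sequence of moves beginning with Proponent (P)
   asserting φ at position 0, with O moving at odd positions and P at even
   positions.  Each later move attacks or defends an earlier move of the other
   player, according to the particle rules.  Structural rules (D10, D11, D12,
   D13, E, and the variants D10*, D10′) constrain dialogues further.  P wins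
   if P made the last move and no moves are available to O; φ is S-valid if P
   has an S-winning strategy for φ. -/

namespace LorenzenDialogues

/-- Propositional formulas: atoms, ¬, ∧, ∨, →. -/
inductive Formula : Type
  | atom : ℕ → Formula
  | neg  : Formula → Formula
  | and  : Formula → Formula → Formula
  | or   : Formula → Formula → Formula
  | imp  : Formula → Formula → Formula
deriving DecidableEq

/-- Statements: formulas together with the symbolic attacks `?`, `∧_L`, `∧_R`. -/
inductive Statement : Type
  | form  : Formula → Statement
  | qmark : Statement
  | andL  : Statement
  | andR  : Statement
deriving DecidableEq

/-- Particle rules, attack part: which statements attack which formulas. -/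
inductive Attacks : Statement → Formula → Prop
  | andL (a b : Formula) : Attacks .andL (.and a b)
  | andR (a b : Formula) : Attacks .andR (.and a b)
  | qmark (a b : Formula) : Attacks .qmark (.or a b)
  | imp (a b : Formula) : Attacks (.form a) (.imp a b)
  | neg (a : Formula) : Attacks (.form a) (.neg a)

/-- Particle rules, defense part: `Defends χ a s` means `s` is a permitted
    defense of the formula `χ` against the attack `a`.  (A negation admits
    no defense.) -/
inductive Defends : Formula → Statement → Statement → Prop
  | andL (a b : Formula) : Defends (.and a b) .andL (.form a)
  | andR (a b : Formula) : Defends (.and a b) .andR (.form b)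
  | orL (a b : Formula) : Defends (.or a b) .qmark (.form a)
  | orR (a b : Formula) : Defends (.or a b) .qmark (.form b)
  | imp (a b : Formula) : Defends (.imp a b) (.form a) (.form b)

/-- A move: a statement, a flag recording whether it is an attack (`true`)
    or a defense (`false`), and the position of the earlier move it attacks,
    resp. the earlier attack it defends against. -/
structure Move : Type where
  statement : Statement
  isAttack : Bool
  ref : ℕ
deriving DecidableEq

/-- A dialogue: the initial formula asserted by P at position 0, followed by
    the list of later moves (the move at list index `i` occupies position
    `i + 1`; O moves at odd positions, P at even positions). -/
structure Dialogue : Type where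
  initial : Formula
  moves : List Move

/-- The statement asserted at position `n` (if any). -/
def Dialogue.stmtAt (d : Dialogue) (n : ℕ) : Option Statement :=
  if n = 0 then some (.form d.initial) else (d.moves[n - 1]?).map Move.statement

/-- The move at position `n ≥ 1` (if any); position 0 is the initial assertion,
    not a move. -/
def Dialogue.moveAt (d : Dialogue) (n : ℕ) : Option Move :=
  if n = 0 then none else d.moves[n - 1]?

/-- The move `m`, played at position `n ≥ 1`, is permitted by the particle
    rules: it refers to an earlier position of the other player; if it is an
    attack, it attacks a formula asserted there, and if it is a defense, it
    responds to an attack played there, as the particle rules prescribe. -/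
def MoveOK (d : Dialogue) (n : ℕ) (m : Move) : Prop :=
  m.ref < n ∧ m.ref % 2 ≠ n % 2 ∧
    (m.isAttack = true →
      ∃ ψ, d.stmtAt m.ref = some (.form ψ) ∧ Attacks m.statement ψ) ∧
    (m.isAttack = false →
      ∃ a χ, d.moveAt m.ref = some a ∧ a.isAttack = true ∧
        d.stmtAt a.ref = some (.form χ) ∧ Defends χ a.statement m.statement)

/-- The dialogue adheres to the particle rules (every move is legal). -/
def ParticleOK (d : Dialogue) : Prop :=
  ∀ i m, d.moves[i]? = some m → MoveOK d (i + 1) m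

/-- Position `n` carries a defense of the attack made at position `r`. -/
def IsDefenseOf (d : Dialogue) (n r : ℕ) : Prop :=
  ∃ m, d.moveAt n = some m ∧ m.isAttack = false ∧ m.ref = r

/-- Position `n` carries an attack on the assertion made at position `r`. -/
def IsAttackOn (d : Dialogue) (n r : ℕ) : Prop :=
  ∃ m, d.moveAt n = some m ∧ m.isAttack = true ∧ m.ref = r

/-- Position `n` carries an attack. -/
def IsAttackPos (d : Dialogue) (n : ℕ) : Prop :=
  ∃ m, d.moveAt n = some m ∧ m.isAttack = true

/-- The attack at position `r` is still open (no defense against it has yet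
    been played) before position `k`. -/
def OpenAt (d : Dialogue) (r k : ℕ) : Prop :=
  IsAttackPos d r ∧ ¬ ∃ j, j < k ∧ IsDefenseOf d j r

/-- (D10) P may assert an atomic formula only after it has been asserted by O
    before. -/
def D10 (d : Dialogue) : Prop :=
  ∀ n p, n % 2 = 0 → d.stmtAt n = some (.form (.atom p)) →
    ∃ j, j < n ∧ j % 2 = 1 ∧ d.stmtAt j = some (.form (.atom p))

/-- (D10*) P may assert an atom `p` only if O has asserted `p` or `¬p`
    before. -/
def D10star (d : Dialogue) : Prop :=
  ∀ n p, n % 2 = 0 → d.stmtAt n = some (.form (.atom p)) →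
    ∃ j, j < n ∧ j % 2 = 1 ∧
      (d.stmtAt j = some (.form (.atom p)) ∨
        d.stmtAt j = some (.form (.neg (.atom p))))

/-- (D10′) P may assert an atom `p` only if O has asserted `p` or `¬¬p`
    before. -/
def D10prime (d : Dialogue) : Prop :=
  ∀ n p, n % 2 = 0 → d.stmtAt n = some (.form (.atom p)) →
    ∃ j, j < n ∧ j % 2 = 1 ∧
      (d.stmtAt j = some (.form (.atom p)) ∨
        d.stmtAt j = some (.form (.neg (.neg (.atom p)))))

/-- (D11) When defending, only the most recent open attack may be responded
    to: the attack defended against is open, and no strictly more recent open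
    attack (against the same player) exists. -/
def D11 (d : Dialogue) : Prop :=
  ∀ n r, IsDefenseOf d n r →
    OpenAt d r n ∧ ¬ ∃ r', r < r' ∧ r' < n ∧ r' % 2 = r % 2 ∧ OpenAt d r' n

/-- (D12) An attack may be answered at most once. -/
def D12 (d : Dialogue) : Prop :=
  ∀ n₁ n₂ r, IsDefenseOf d n₁ r → IsDefenseOf d n₂ r → n₁ = n₂

/-- (D13) A P-assertion (made at an even position) may be attacked at most
    once. -/
def D13 (d : Dialogue) : Prop :=
  ∀ n₁ n₂ r, r % 2 = 0 → IsAttackOn d n₁ r → IsAttackOn d n₂ r → n₁ = n₂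

/-- (E) O can react only upon the immediately preceding P-statement. -/
def ERule (d : Dialogue) : Prop :=
  ∀ n m, n % 2 = 1 → d.moveAt n = some m → m.ref = n - 1

/-- A ruleset is a set of structural rules, i.e. a predicate on dialogues. -/
def Ruleset := Dialogue → Prop

/-- Ruleset D = {D10, D11, D12, D13}. -/
def rulesetD : Ruleset := fun d => D10 d ∧ D11 d ∧ D12 d ∧ D13 d

/-- Ruleset E = D ∪ {E}. -/
def rulesetE : Ruleset := fun d => rulesetD d ∧ ERule d

/-- Ruleset CL = E − {D11, D12} = {D10, D13, E}. -/
def rulesetCL : Ruleset := fun d => D10 d ∧ D13 d ∧ ERule d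

/-- Ruleset N = D − {D11, D12} = {D10, D13}. -/
def rulesetN : Ruleset := fun d => D10 d ∧ D13 d

/-- Ruleset E* = {D10*, D11, D12, D13, E}. -/
def rulesetEstar : Ruleset :=
  fun d => D10star d ∧ D11 d ∧ D12 d ∧ D13 d ∧ ERule d

/-- Ruleset E′ = {D10′, D11, D12, D13, E}. -/
def rulesetEprime : Ruleset :=
  fun d => D10prime d ∧ D11 d ∧ D12 d ∧ D13 d ∧ ERule d

/-- An S-dialogue: a dialogue adhering to the particle rules and to the
    structural rules S. -/
def Legal (S : Ruleset) (d : Dialogue) : Prop := ParticleOK d ∧ S d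

/-- Extend a dialogue by one move. -/
def Dialogue.extend (d : Dialogue) (m : Move) : Dialogue :=
  ⟨d.initial, d.moves ++ [m]⟩

/-- The position about to be played. -/
def nextPos (d : Dialogue) : ℕ := d.moves.length + 1

/-- It is P's turn (the next position is even). -/
def PTurn (d : Dialogue) : Prop := nextPos d % 2 = 0

/-- The move `m` legally extends the S-dialogue `d`. -/
def LegalExt (S : Ruleset) (d : Dialogue) (m : Move) : Prop :=
  Legal S (d.extend m)

/-- `PWinningC S C d` holds when P, moving under the additional constraint
    `C` on P's own choices, has a winning strategy in the S-dialogue game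
    continuing the dialogue `d`: at P's turn, P has a legal move (satisfying
    `C`) after which P is still winning; at O's turn, every legal O-move
    leads to a position where P is winning (in particular, if no O-move is
    available, P has won: P made the last move and O cannot move). -/
inductive PWinningC (S : Ruleset) (C : Dialogue → Move → Prop) : Dialogue → Prop
  | pMove (d : Dialogue) (m : Move) (hturn : PTurn d)
      (hm : LegalExt S d m) (hC : C d m)
      (h : PWinningC S C (d.extend m)) : PWinningC S C d
  | oMoves (d : Dialogue) (hturn : ¬ PTurn d)
      (h : ∀ m, LegalExt S d m → PWinningC S C (d.extend m)) :
      PWinningC S C d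

/-- P has a winning strategy continuing the S-dialogue `d`. -/
def PWinning (S : Ruleset) (d : Dialogue) : Prop :=
  PWinningC S (fun _ _ => True) d

/-- `valid S φ` (written `⊨_S φ`): the opening assertion of φ is itself a
    legal S-dialogue and P has an S-winning strategy for φ. -/
def valid (S : Ruleset) (φ : Formula) : Prop :=
  Legal S ⟨φ, []⟩ ∧ PWinning S ⟨φ, []⟩

/-- Derivability in intuitionistic propositional logic (a Hilbert-style
    axiomatization with modus ponens). -/
inductive IProv : Formula → Prop
  | k (a b : Formula) : IProv (.imp a (.imp b a))
  | s (a b c : Formula) :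
      IProv (.imp (.imp a (.imp b c)) (.imp (.imp a b) (.imp a c)))
  | andE1 (a b : Formula) : IProv (.imp (.and a b) a)
  | andE2 (a b : Formula) : IProv (.imp (.and a b) b)
  | andI (a b : Formula) : IProv (.imp a (.imp b (.and a b)))
  | orI1 (a b : Formula) : IProv (.imp a (.or a b))
  | orI2 (a b : Formula) : IProv (.imp b (.or a b))
  | orE (a b c : Formula) :
      IProv (.imp (.imp a c) (.imp (.imp b c) (.imp (.or a b) c)))
  | negI (a b : Formula) :
      IProv (.imp (.imp a b) (.imp (.imp a (.neg b)) (.neg a)))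
  | negE (a b : Formula) : IProv (.imp (.neg a) (.imp a b))
  | mp (a b : Formula) : IProv (.imp a b) → IProv a → IProv b

/-- The stability principle ¬¬p → p for the atom `p`. -/
def stab (p : ℕ) : Formula := .imp (.neg (.neg (.atom p))) (.atom p)

/-- Stable logic: intuitionistic propositional logic plus all instances of
    the stability scheme ¬¬p → p for atoms p, closed under modus ponens. -/
inductive StableProv : Formula → Prop
  | intuit (a : Formula) : IProv a → StableProv a
  | stab (p : ℕ) : StableProv (stab p)
  | mp (a b : Formula) : StableProv (.imp a b) → StableProv a → StableProv b

/-- Boolean evaluation of a formula under a valuation of its atoms. -/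
def Formula.eval (v : ℕ → Bool) : Formula → Bool
  | .atom p => v p
  | .neg a => !(a.eval v)
  | .and a b => a.eval v && b.eval v
  | .or a b => a.eval v || b.eval v
  | .imp a b => !(a.eval v) || b.eval v

/-- A classical tautology: true under every Boolean valuation. -/
def Tautology (φ : Formula) : Prop := ∀ v, φ.eval v = true

/-- Uniform substitution of formulas for atoms, applied homomorphically. -/
def Formula.subst (σ : ℕ → Formula) : Formula → Formula
  | .atom p => σ p
  | .neg a => .neg (a.subst σ)
  | .and a b => .and (a.subst σ) (b.subst σ)
  | .or a b => .or (a.subst σ) (b.subst σ)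
  | .imp a b => .imp (a.subst σ) (b.subst σ)

/-- The atoms occurring in a formula. -/
def Formula.atoms : Formula → List ℕ
  | .atom p => [p]
  | .neg a => a.atoms
  | .and a b => a.atoms ++ b.atoms
  | .or a b => a.atoms ++ b.atoms
  | .imp a b => a.atoms ++ b.atoms

/-- Conjunction of a nonempty list of formulas. -/
def conjList (f : Formula) : List Formula → Formula
  | [] => f
  | g :: gs => .and f (conjList g gs)

/-- The conjunction (¬¬p → p) ∧ … of stability instances for the atoms
    `p :: ps`. -/
def stabConj (p : ℕ) (ps : List ℕ) : Formula :=
  conjList (stab p) (ps.map stab)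


/-!
Any Kripke model in which the atoms of φ are stable forces φ. Otherwise O defeats every strategy
of P while keeping all of O's assertions forced at the current world: O attacks each
P-assertion that is not forced, moving up to a world that witnesses this, and answers P's
attacks by forced defenses, or by attacking P's unforced assertion. By (D11) P may only defend
O's latest attack, against which no defense is forced, and by (D10′) an atom asserted by P was
asserted by O as `p` or `¬¬p` and is therefore forced, by stability. So P never gets a position
where O cannot move. Applied to the canonical model of intuitionistic logic over the stability
axioms of the atoms of φ, this yields a derivation of φ from finitely many of them.
-/

namespace IProv

theorem imp_self (a : Formula) : IProv (.imp a a) :=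
  mp _ _ (mp _ _ (s a (.imp a a) a) (k a (.imp a a))) (k a a)

theorem imp_of {b : Formula} (h : IProv b) (a : Formula) : IProv (.imp a b) :=
  mp _ _ (k b a) h

theorem imp_mp {a b c : Formula} (hbc : IProv (.imp a (.imp b c))) (hb : IProv (.imp a b)) :
    IProv (.imp a c) :=
  mp _ _ (mp _ _ (s a b c) hbc) hb

theorem imp_trans {a b c : Formula} (hab : IProv (.imp a b)) (hbc : IProv (.imp b c)) :
    IProv (.imp a c) :=
  imp_mp (imp_of hbc a) hab

theorem imp_and {a b c : Formula} (hb : IProv (.imp a b)) (hc : IProv (.imp a c)) :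
    IProv (.imp a (.and b c)) :=
  imp_mp (imp_trans hb (andI b c)) hc

theorem conjList_append_left (f g : Formula) (hs : List Formula) :
    ∀ gs, IProv (.imp (conjList f (gs ++ g :: hs)) (conjList f gs))
  | [] => andE1 _ _
  | g' :: gs =>
    imp_and (andE1 _ _) (imp_trans (andE2 _ _) (conjList_append_left g' g hs gs))

theorem conjList_append_right (f g : Formula) (hs : List Formula) :
    ∀ gs, IProv (.imp (conjList f (gs ++ g :: hs)) (conjList g hs))
  | [] => andE2 _ _
  | g' :: gs => imp_trans (andE2 _ _) (conjList_append_right g' g hs gs)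

theorem stabConj_append_left (p q : ℕ) (ps qs : List ℕ) :
    IProv (.imp (stabConj p (ps ++ q :: qs)) (stabConj p ps)) := by
  simpa [stabConj] using conjList_append_left (stab p) (stab q) (qs.map stab) (ps.map stab)

theorem stabConj_append_right (p q : ℕ) (ps qs : List ℕ) :
    IProv (.imp (stabConj p (ps ++ q :: qs)) (stabConj q qs)) := by
  simpa [stabConj] using conjList_append_right (stab p) (stab q) (qs.map stab) (ps.map stab)

end IProv

inductive IProvFrom (T : Set Formula) : Formula → Prop
  | hyp {a : Formula} : a ∈ T → IProvFrom T a
  | ax {a : Formula} : IProv a → IProvFrom T a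
  | mp {a b : Formula} : IProvFrom T (.imp a b) → IProvFrom T a → IProvFrom T b

namespace IProvFrom

variable {T U : Set Formula} {a b c : Formula}

theorem mono (hTU : T ⊆ U) (h : IProvFrom T a) : IProvFrom U a := by
  induction h with
  | hyp ha => exact hyp (hTU ha)
  | ax ha => exact ax ha
  | mp _ _ ih₁ ih₂ => exact mp ih₁ ih₂

theorem mp₂ (h : IProv (.imp a (.imp b c))) (ha : IProvFrom T a) (hb : IProvFrom T b) :
    IProvFrom T c :=
  mp (mp (ax h) ha) hb

theorem deduction (h : IProvFrom (insert a T) b) : IProvFrom T (.imp a b) := by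
  induction h with
  | hyp hb =>
    rcases hb with rfl | hb
    · exact ax (IProv.imp_self _)
    · exact mp (ax (IProv.k _ a)) (hyp hb)
  | ax hb => exact ax (IProv.imp_of hb a)
  | mp _ _ ih₁ ih₂ => exact mp₂ (IProv.s _ _ _) ih₁ ih₂

theorem exists_mem_of_isChain {C : Set (Set Formula)} (hC : IsChain (· ⊆ ·) C)
    (hne : C.Nonempty) (h : IProvFrom (⋃₀ C) a) : ∃ T ∈ C, IProvFrom T a := by
  induction h with
  | hyp ha =>
    obtain ⟨T, hT, haT⟩ := Set.mem_sUnion.1 ha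
    exact ⟨T, hT, hyp haT⟩
  | ax ha => exact ⟨hne.some, hne.some_mem, ax ha⟩
  | mp _ _ ih₁ ih₂ =>
    obtain ⟨T₁, hT₁, h₁⟩ := ih₁
    obtain ⟨T₂, hT₂, h₂⟩ := ih₂
    rcases hC.total hT₁ hT₂ with h12 | h21
    · exact ⟨T₂, hT₂, mp (h₁.mono h12) h₂⟩
    · exact ⟨T₁, hT₁, mp h₁ (h₂.mono h21)⟩

/-- The atom `p₀` pads the conjunction when the derivation uses no stability hypothesis. -/
theorem exists_stabConj {A : Set ℕ} {p₀ : ℕ} (hp₀ : p₀ ∈ A)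
    (h : IProvFrom (stab '' A) a) :
    ∃ (p : ℕ) (ps : List ℕ), (∀ q ∈ p :: ps, q ∈ A) ∧ IProv (.imp (stabConj p ps) a) := by
  induction h with
  | hyp ha =>
    obtain ⟨p, hp, rfl⟩ := ha
    exact ⟨p, [], by simpa using hp, IProv.imp_self _⟩
  | ax ha => exact ⟨p₀, [], by simpa using hp₀, IProv.imp_of ha _⟩
  | mp _ _ ih₁ ih₂ =>
    obtain ⟨p, ps, hps, h₁⟩ := ih₁
    obtain ⟨q, qs, hqs, h₂⟩ := ih₂
    refine ⟨p, ps ++ q :: qs, fun r hr => ?_, ?_⟩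
    · rcases List.mem_cons.1 hr with rfl | hr
      · exact hps r List.mem_cons_self
      rcases List.mem_append.1 hr with hr | hr
      · exact hps r (List.mem_cons_of_mem _ hr)
      · exact hqs r hr
    · exact IProv.imp_mp (IProv.imp_trans (IProv.stabConj_append_left p q ps qs) h₁)
        (IProv.imp_trans (IProv.stabConj_append_right p q ps qs) h₂)

end IProvFrom

section Kripke

variable {W : Type*} [Preorder W] {v : ℕ → W → Prop}

def Forces (v : ℕ → W → Prop) : W → Formula → Prop
  | w, .atom p => v p w
  | w, .neg a => ∀ w' ≥ w, ¬ Forces v w' a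
  | w, .and a b => Forces v w a ∧ Forces v w b
  | w, .or a b => Forces v w a ∨ Forces v w b
  | w, .imp a b => ∀ w' ≥ w, Forces v w' a → Forces v w' b

theorem Forces.mono (hv : ∀ p, Monotone (v p)) {w w' : W} (hw : w ≤ w') :
    ∀ {c : Formula}, Forces v w c → Forces v w' c
  | .atom p, h => hv p hw h
  | .neg _, h => fun u hu => h u (hw.trans hu)
  | .and _ _, h => ⟨Forces.mono hv hw h.1, Forces.mono hv hw h.2⟩
  | .or _ _, h => h.imp (Forces.mono hv hw) (Forces.mono hv hw)
  | .imp _ _, h => fun u hu => h u (hw.trans hu)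

def StableOn (A : Set ℕ) (v : ℕ → W → Prop) : Prop :=
  ∀ p ∈ A, ∀ w, Forces v w (.neg (.neg (.atom p))) → v p w

theorem Forces.defends_or_not_forces {w : W} {ψ : Formula} {s : Statement}
    (h : Forces v w ψ) (hs : Attacks s ψ) :
    (∃ e, Defends ψ s (.form e) ∧ Forces v w e) ∨ ∃ a, s = .form a ∧ ¬ Forces v w a := by
  cases hs with
  | andL a b => exact .inl ⟨a, .andL a b, h.1⟩
  | andR a b => exact .inl ⟨b, .andR a b, h.2⟩
  | qmark a b =>
    exact h.elim (fun ha => .inl ⟨a, .orL a b, ha⟩) (fun hb => .inl ⟨b, .orR a b, hb⟩)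
  | imp a b =>
    by_cases ha : Forces v w a
    · exact .inl ⟨b, .imp a b, h w le_rfl ha⟩
    · exact .inr ⟨a, rfl, ha⟩
  | neg a => exact .inr ⟨a, rfl, h w le_rfl⟩

theorem exists_attack_of_not_forces {w : W} {ψ : Formula} (hψ : ∀ p, ψ ≠ .atom p)
    (h : ¬ Forces v w ψ) :
    ∃ w' ≥ w, ∃ s, Attacks s ψ ∧ (∀ e, s = .form e → Forces v w' e) ∧
      ∀ e, Defends ψ s (.form e) → ¬ Forces v w' e := by
  cases ψ with
  | atom p => exact absurd rfl (hψ p)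
  | neg a =>
    simp only [Forces, not_forall, not_not] at h
    obtain ⟨w', hw', ha⟩ := h
    exact ⟨w', hw', .form a, .neg a, by rintro e ⟨⟩; exact ha, by rintro e ⟨⟩⟩
  | and a b =>
    by_cases ha : Forces v w a
    · exact ⟨w, le_rfl, .andR, .andR a b, by rintro e ⟨⟩,
        by rintro e ⟨⟩ hb; exact h ⟨ha, hb⟩⟩
    · exact ⟨w, le_rfl, .andL, .andL a b, by rintro e ⟨⟩, by rintro e ⟨⟩; exact ha⟩
  | or a b =>
    refine ⟨w, le_rfl, .qmark, .qmark a b, by rintro e ⟨⟩, ?_⟩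
    rintro e (_ | _) he
    exacts [h (.inl he), h (.inr he)]
  | imp a b =>
    simp only [Forces, not_forall] at h
    obtain ⟨w', hw', ha, hb⟩ := h
    exact ⟨w', hw', .form a, .imp a b, by rintro e ⟨⟩; exact ha, by rintro e ⟨⟩; exact hb⟩

end Kripke

structure IsPrimeTheory (T : Set Formula) : Prop where
  closed : ∀ {a}, IProvFrom T a → a ∈ T
  prime : ∀ {a b}, Formula.or a b ∈ T → a ∈ T ∨ b ∈ T
  exists_not_mem : ∃ c, c ∉ T

namespace IsPrimeTheory

variable {T : Set Formula} {a b c : Formula}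

theorem mem_of_iProv (hT : IsPrimeTheory T) (h : IProv (.imp a b)) (ha : a ∈ T) : b ∈ T :=
  hT.closed (.mp (.ax h) (.hyp ha))

theorem mem_of_iProv₂ (hT : IsPrimeTheory T) (h : IProv (.imp a (.imp b c))) (ha : a ∈ T)
    (hb : b ∈ T) : c ∈ T :=
  hT.closed (.mp₂ h (.hyp ha) (.hyp hb))

theorem mem_of_imp_mem (hT : IsPrimeTheory T) (hab : Formula.imp a b ∈ T) (ha : a ∈ T) :
    b ∈ T :=
  hT.closed (.mp (.hyp hab) (.hyp ha))

end IsPrimeTheory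

theorem exists_isPrimeTheory {T : Set Formula} {c : Formula} (h : ¬ IProvFrom T c) :
    ∃ U, IsPrimeTheory U ∧ T ⊆ U ∧ c ∉ U := by
  obtain ⟨U, hTU, hU⟩ := zorn_subset_nonempty {U | ¬ IProvFrom U c}
    (fun C hCS hC hne => ⟨⋃₀ C, fun hc => by
      obtain ⟨V, hV, hVc⟩ := IProvFrom.exists_mem_of_isChain hC hne hc
      exact hCS hV hVc, fun _ => Set.subset_sUnion_of_mem⟩) T h
  have hUc : ¬ IProvFrom U c := hU.prop
  have hins : ∀ x ∉ U, IProvFrom U (.imp x c) := fun x hx => by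
    by_contra hxc
    exact hx (hU.eq_of_ge (fun h' => hxc h'.deduction) (Set.subset_insert x U) ▸
      Set.mem_insert x U)
  refine ⟨U, ⟨fun {x} hx => ?_, fun {a b} hab => ?_, c, fun hc => hUc (.hyp hc)⟩, hTU,
    fun hc => hUc (.hyp hc)⟩
  · by_contra hxU
    exact hUc (.mp (hins x hxU) hx)
  · by_contra hneither
    obtain ⟨ha, hb⟩ := not_or.1 hneither
    exact hUc (.mp (.mp₂ (.orE a b c) (hins a ha) (hins b hb)) (.hyp hab))

abbrev CanonicalWorld (B : Set Formula) : Type :=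
  {T : Set Formula // IsPrimeTheory T ∧ B ⊆ T}

def canonicalVal (B : Set Formula) (p : ℕ) (T : CanonicalWorld B) : Prop :=
  Formula.atom p ∈ T.1

namespace CanonicalWorld

variable {B : Set Formula}

theorem exists_le_of_not_iProvFrom (T : CanonicalWorld B) {a c : Formula}
    (h : ¬ IProvFrom (insert a T.1) c) : ∃ U : CanonicalWorld B, T ≤ U ∧ a ∈ U.1 ∧ c ∉ U.1 := by
  obtain ⟨U, hU, hTU, hcU⟩ := exists_isPrimeTheory h
  have hT : T.1 ⊆ U := (Set.subset_insert a T.1).trans hTU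
  exact ⟨⟨U, hU, T.2.2.trans hT⟩, hT, hTU (Set.mem_insert a T.1), hcU⟩

theorem forces_iff : ∀ (c : Formula) (T : CanonicalWorld B),
    Forces (canonicalVal B) T c ↔ c ∈ T.1
  | .atom _, _ => Iff.rfl
  | .neg a, T => by
    refine ⟨fun h => ?_, fun h U hTU ha => ?_⟩
    · by_contra hna
      have : ¬ IProvFrom (insert a T.1) (.neg a) := fun h' =>
        hna (T.2.1.closed (.mp₂ (.negI a a) (.ax (IProv.imp_self a)) h'.deduction))
      obtain ⟨U, hTU, haU, -⟩ := exists_le_of_not_iProvFrom T this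
      exact h U hTU ((forces_iff a U).2 haU)
    · obtain ⟨c, hc⟩ := U.2.1.exists_not_mem
      exact hc (U.2.1.mem_of_iProv₂ (.negE a c) (hTU h) ((forces_iff a U).1 ha))
  | .and a b, T => by
    rw [Forces, forces_iff a T, forces_iff b T]
    exact ⟨fun h => T.2.1.mem_of_iProv₂ (.andI a b) h.1 h.2,
      fun h => ⟨T.2.1.mem_of_iProv (.andE1 a b) h, T.2.1.mem_of_iProv (.andE2 a b) h⟩⟩
  | .or a b, T => by
    rw [Forces, forces_iff a T, forces_iff b T]
    exact ⟨fun h => h.elim (T.2.1.mem_of_iProv (.orI1 a b)) (T.2.1.mem_of_iProv (.orI2 a b)),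
      T.2.1.prime⟩
  | .imp a b, T => by
    refine ⟨fun h => ?_, fun h U hTU ha => ?_⟩
    · by_contra hab
      obtain ⟨U, hTU, haU, hbU⟩ :=
        exists_le_of_not_iProvFrom T (fun h' => hab (T.2.1.closed h'.deduction))
      exact hbU ((forces_iff b U).1 (h U hTU ((forces_iff a U).2 haU)))
    · exact (forces_iff b U).2 (U.2.1.mem_of_imp_mem (hTU h) ((forces_iff a U).1 ha))

end CanonicalWorld

theorem canonicalVal_monotone (B : Set Formula) (p : ℕ) : Monotone (canonicalVal B p) :=
  fun _ _ hTU hp => hTU hp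

theorem stableOn_canonicalVal (A : Set ℕ) : StableOn A (canonicalVal (stab '' A)) :=
  fun p hp T h => T.2.1.mem_of_imp_mem (T.2.2 ⟨p, hp, rfl⟩)
    ((CanonicalWorld.forces_iff _ T).1 h)

theorem iProvFrom_of_forces_canonical {B : Set Formula} {c : Formula}
    (h : ∀ T : CanonicalWorld B, Forces (canonicalVal B) T c) : IProvFrom B c := by
  by_contra hc
  obtain ⟨U, hU, hBU, hcU⟩ := exists_isPrimeTheory hc
  exact hcU ((CanonicalWorld.forces_iff c ⟨U, hU, hBU⟩).1 (h ⟨U, hU, hBU⟩))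

section Dialogues

variable {d : Dialogue} {m m' : Move} {j n r : ℕ} {s : Statement}

namespace Dialogue

@[simp] theorem stmtAt_zero (d : Dialogue) : d.stmtAt 0 = some (.form d.initial) := rfl

@[simp] theorem length_extend (d : Dialogue) (m : Move) :
    (d.extend m).moves.length = d.moves.length + 1 := by
  simp [extend]

theorem le_length_of_moveAt (h : d.moveAt j = some m) : 1 ≤ j ∧ j ≤ d.moves.length := by
  unfold moveAt at h
  split_ifs at h with hj
  have := (List.getElem?_eq_some_iff.1 h).1
  omega

theorem le_length_of_stmtAt (h : d.stmtAt j = some s) : j ≤ d.moves.length := by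
  unfold stmtAt at h
  split_ifs at h with hj
  · omega
  · obtain ⟨m, hm, -⟩ := Option.map_eq_some_iff.1 h
    have := (List.getElem?_eq_some_iff.1 hm).1
    omega

theorem stmtAt_of_moveAt (h : d.moveAt j = some m) : d.stmtAt j = some m.statement := by
  unfold moveAt at h
  split_ifs at h with hj
  simp [stmtAt, hj, h]

theorem moveAt_extend_of_le (hj : j ≤ d.moves.length) : (d.extend m).moveAt j = d.moveAt j := by
  unfold moveAt extend
  split_ifs
  · rfl
  · exact List.getElem?_append_left (by omega)

theorem stmtAt_extend_of_le (hj : j ≤ d.moves.length) : (d.extend m).stmtAt j = d.stmtAt j := by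
  unfold stmtAt extend
  split_ifs
  · rfl
  · rw [List.getElem?_append_left (by omega)]

theorem moveAt_extend_length (d : Dialogue) (m : Move) :
    (d.extend m).moveAt (d.moves.length + 1) = some m := by
  simp [moveAt, extend]

theorem moveAt_extend_eq_some :
    (d.extend m).moveAt j = some m' ↔
      d.moveAt j = some m' ∨ j = d.moves.length + 1 ∧ m' = m := by
  constructor
  · intro h
    have hj := le_length_of_moveAt h
    rw [length_extend] at hj
    by_cases hjN : j ≤ d.moves.length
    · exact .inl (moveAt_extend_of_le hjN ▸ h)
    · obtain rfl : j = d.moves.length + 1 := by omega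
      exact .inr ⟨rfl, Option.some_injective _ ((moveAt_extend_length d m).symm.trans h).symm⟩
  · rintro (h | ⟨rfl, rfl⟩)
    · exact moveAt_extend_of_le (le_length_of_moveAt h).2 ▸ h
    · exact moveAt_extend_length d m'

theorem stmtAt_extend_eq_some :
    (d.extend m).stmtAt j = some s ↔
      d.stmtAt j = some s ∨ j = d.moves.length + 1 ∧ s = m.statement := by
  constructor
  · intro h
    have hj := le_length_of_stmtAt h
    rw [length_extend] at hj
    by_cases hjN : j ≤ d.moves.length
    · exact .inl (stmtAt_extend_of_le hjN ▸ h)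
    · obtain rfl : j = d.moves.length + 1 := by omega
      rw [stmtAt_of_moveAt (moveAt_extend_length d m)] at h
      exact .inr ⟨rfl, (Option.some_injective _ h).symm⟩
  · rintro (h | ⟨rfl, rfl⟩)
    · exact stmtAt_extend_of_le (le_length_of_stmtAt h) ▸ h
    · exact stmtAt_of_moveAt (moveAt_extend_length d m)

end Dialogue

open Dialogue

theorem MoveOK.extend (h : MoveOK d j m') : MoveOK (d.extend m) j m' := by
  obtain ⟨hlt, hpar, hatt, hdef⟩ := h
  refine ⟨hlt, hpar, fun hA => ?_, fun hA => ?_⟩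
  · obtain ⟨ψ, hψ, hs⟩ := hatt hA
    exact ⟨ψ, stmtAt_extend_eq_some.2 (.inl hψ), hs⟩
  · obtain ⟨a, χ, ha, haA, hχ, hd⟩ := hdef hA
    exact ⟨a, χ, moveAt_extend_eq_some.2 (.inl ha), haA, stmtAt_extend_eq_some.2 (.inl hχ),
      hd⟩

theorem moveOK_attack_last {ψ : Formula} (hψ : d.stmtAt d.moves.length = some (.form ψ))
    (hs : Attacks s ψ) : MoveOK d (d.moves.length + 1) ⟨s, true, d.moves.length⟩ :=
  ⟨Nat.lt_succ_self _, by dsimp only; omega, fun _ => ⟨ψ, hψ, hs⟩, nofun⟩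

theorem moveOK_defense_last {a : Move} {χ : Formula} (ha : d.moveAt d.moves.length = some a)
    (haA : a.isAttack = true) (hχ : d.stmtAt a.ref = some (.form χ))
    (hd : Defends χ a.statement s) :
    MoveOK d (d.moves.length + 1) ⟨s, false, d.moves.length⟩ :=
  ⟨Nat.lt_succ_self _, by dsimp only; omega, nofun, fun _ => ⟨a, χ, ha, haA, hχ, hd⟩⟩

namespace ParticleOK

theorem moveOK (hp : ParticleOK d) (h : d.moveAt j = some m) : MoveOK d j m := by
  have hj := (le_length_of_moveAt h).1
  obtain ⟨i, rfl⟩ : ∃ i, j = i + 1 := ⟨j - 1, by omega⟩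
  exact hp i m (by simpa [moveAt] using h)

theorem ref_lt (hp : ParticleOK d) (h : d.moveAt j = some m) : m.ref < j :=
  (hp.moveOK h).1

theorem ref_lt_length (hp : ParticleOK d) (h : d.moveAt j = some m) : m.ref < d.moves.length :=
  (hp.ref_lt h).trans_le (le_length_of_moveAt h).2

theorem extend (hp : ParticleOK d) (hm : MoveOK d (d.moves.length + 1) m) :
    ParticleOK (d.extend m) := by
  intro i mi hi
  have hi' : (d.extend m).moveAt (i + 1) = some mi := by simpa [moveAt] using hi
  rcases moveAt_extend_eq_some.1 hi' with h | ⟨hlast, rfl⟩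
  · exact (hp.moveOK h).extend
  · exact (Nat.succ_injective hlast).symm ▸ hm.extend

end ParticleOK

theorem isDefenseOf_extend : IsDefenseOf (d.extend m) n r ↔
    IsDefenseOf d n r ∨ n = d.moves.length + 1 ∧ m.isAttack = false ∧ m.ref = r := by
  simp only [IsDefenseOf, moveAt_extend_eq_some]
  aesop

theorem isAttackOn_extend : IsAttackOn (d.extend m) n r ↔
    IsAttackOn d n r ∨ n = d.moves.length + 1 ∧ m.isAttack = true ∧ m.ref = r := by
  simp only [IsAttackOn, moveAt_extend_eq_some]
  aesop

theorem openAt_extend_of_le {k : ℕ} (hr : r ≤ d.moves.length) (hk : k ≤ d.moves.length + 1) :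
    OpenAt (d.extend m) r k ↔ OpenAt d r k := by
  have hdef : ∀ j < k, IsDefenseOf (d.extend m) j r ↔ IsDefenseOf d j r := fun j hj => by
    simp only [IsDefenseOf, moveAt_extend_of_le (show j ≤ d.moves.length by omega)]
  simp only [OpenAt, IsAttackPos, moveAt_extend_of_le hr]
  exact and_congr_right fun _ => not_congr
    ⟨fun ⟨j, hj, h⟩ => ⟨j, hj, (hdef j hj).1 h⟩, fun ⟨j, hj, h⟩ => ⟨j, hj, (hdef j hj).2 h⟩⟩

namespace ParticleOK

theorem lt_length_of_isDefenseOf (hp : ParticleOK d) (h : IsDefenseOf d n r) :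
    r < d.moves.length := by
  obtain ⟨m, hm, -, rfl⟩ := h
  exact hp.ref_lt_length hm

theorem lt_length_of_isAttackOn (hp : ParticleOK d) (h : IsAttackOn d n r) :
    r < d.moves.length := by
  obtain ⟨m, hm, -, rfl⟩ := h
  exact hp.ref_lt_length hm

end ParticleOK

theorem D10prime.extend (h : D10prime d) (hodd : (d.moves.length + 1) % 2 = 1) :
    D10prime (d.extend m) := by
  intro n p hn hst
  rcases stmtAt_extend_eq_some.1 hst with hst | ⟨rfl, -⟩
  · obtain ⟨j, hjn, hj, hj'⟩ := h n p hn hst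
    exact ⟨j, hjn, hj,
      hj'.imp (stmtAt_extend_eq_some.2 <| .inl ·) (stmtAt_extend_eq_some.2 <| .inl ·)⟩
  · omega

theorem D11.extend (hp : ParticleOK d) (h : D11 d) (href : m.ref = d.moves.length)
    (hm : MoveOK d (d.moves.length + 1) m) : D11 (d.extend m) := by
  intro n r hdef
  rcases isDefenseOf_extend.1 hdef with hold | ⟨rfl, hA, rfl⟩
  · obtain ⟨hopen, hlatest⟩ := h n r hold
    obtain ⟨m', hm', -, rfl⟩ := hold
    have hrn := hp.ref_lt hm'
    have hn := (le_length_of_moveAt hm').2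
    refine ⟨(openAt_extend_of_le (by omega) (by omega)).2 hopen, ?_⟩
    rintro ⟨r', hrr', hr'n, hpar, hopen'⟩
    exact hlatest ⟨r', hrr', hr'n, hpar, (openAt_extend_of_le (by omega) (by omega)).1 hopen'⟩
  · obtain ⟨a, -, ha, haA, -⟩ := hm.2.2.2 hA
    refine ⟨⟨⟨a, moveAt_extend_eq_some.2 (.inl ha), haA⟩, ?_⟩, ?_⟩
    · rintro ⟨j, hj, hjdef⟩
      rcases isDefenseOf_extend.1 hjdef with hjdef | ⟨hj', -⟩
      · exact absurd (hp.lt_length_of_isDefenseOf hjdef) (by omega)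
      · omega
    · rintro ⟨r', hr', hr'n, -⟩
      omega

theorem D12.extend (hp : ParticleOK d) (h : D12 d) (href : m.ref = d.moves.length) :
    D12 (d.extend m) := by
  intro n₁ n₂ r h₁ h₂
  rcases isDefenseOf_extend.1 h₁ with h₁ | ⟨rfl, -, hr₁⟩ <;>
    rcases isDefenseOf_extend.1 h₂ with h₂ | ⟨rfl, -, hr₂⟩
  · exact h n₁ n₂ r h₁ h₂
  · exact absurd (hp.lt_length_of_isDefenseOf h₁) (by omega)
  · exact absurd (hp.lt_length_of_isDefenseOf h₂) (by omega)
  · rfl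

theorem D13.extend (hp : ParticleOK d) (h : D13 d) (href : m.ref = d.moves.length) :
    D13 (d.extend m) := by
  intro n₁ n₂ r hr h₁ h₂
  rcases isAttackOn_extend.1 h₁ with h₁ | ⟨rfl, -, hr₁⟩ <;>
    rcases isAttackOn_extend.1 h₂ with h₂ | ⟨rfl, -, hr₂⟩
  · exact h n₁ n₂ r hr h₁ h₂
  · exact absurd (hp.lt_length_of_isAttackOn h₁) (by omega)
  · exact absurd (hp.lt_length_of_isAttackOn h₂) (by omega)
  · rfl

theorem ERule.extend (h : ERule d) (href : m.ref = d.moves.length) : ERule (d.extend m) := by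
  intro n m' hn hm'
  rcases moveAt_extend_eq_some.1 hm' with hm' | ⟨rfl, rfl⟩
  · exact h n m' hn hm'
  · simpa using href

theorem Legal.extend_oMove (hleg : Legal rulesetEprime d) (hN : d.moves.length % 2 = 0)
    (href : m.ref = d.moves.length) (hm : MoveOK d (d.moves.length + 1) m) :
    Legal rulesetEprime (d.extend m) := by
  obtain ⟨hp, h10, h11, h12, h13, hE⟩ := hleg
  exact ⟨hp.extend hm, h10.extend (by omega), h11.extend hp href hm, h12.extend hp href,
    h13.extend hp href, hE.extend href⟩

theorem Formula.exists_mem_atoms : ∀ φ : Formula, ∃ p, p ∈ φ.atoms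
  | .atom p => ⟨p, List.mem_singleton_self p⟩
  | .neg a => a.exists_mem_atoms
  | .and a _ | .or a _ | .imp a _ =>
    a.exists_mem_atoms.imp fun _ hp => List.mem_append_left _ hp

theorem Attacks.atoms_subset {e ψ : Formula} (h : Attacks (.form e) ψ) :
    ∀ q ∈ e.atoms, q ∈ ψ.atoms := by
  cases h <;> intro q hq <;> simp [Formula.atoms, hq]

theorem Defends.atoms_subset {χ e : Formula} (h : Defends χ s (.form e)) :
    ∀ q ∈ e.atoms, q ∈ χ.atoms := by
  cases h <;> intro q hq <;> simp [Formula.atoms, hq]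

theorem Defends.exists_form {χ : Formula} {t : Statement} (h : Defends χ s t) :
    ∃ e, t = .form e := by
  cases h <;> exact ⟨_, rfl⟩

def AtomsIn (A : Set ℕ) (d : Dialogue) : Prop :=
  ∀ j c, d.stmtAt j = some (.form c) → ∀ q ∈ c.atoms, q ∈ A

theorem AtomsIn.extend {A : Set ℕ} (h : AtomsIn A d)
    (hm : ∀ e, m.statement = .form e → ∀ q ∈ e.atoms, q ∈ A) : AtomsIn A (d.extend m) := by
  intro j c hst
  rcases stmtAt_extend_eq_some.1 hst with hst | ⟨-, hc⟩
  exacts [h j c hst, hm c hc.symm]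

section Countermodel

variable {W : Type*} [Preorder W] {v : ℕ → W → Prop} {A : Set ℕ} {w : W}

def OForces (v : ℕ → W → Prop) (w : W) (d : Dialogue) : Prop :=
  ∀ j c, j % 2 = 1 → d.stmtAt j = some (.form c) → Forces v w c

theorem OForces.mono (hv : ∀ p, Monotone (v p)) {w' : W} (hw : w ≤ w') (h : OForces v w d) :
    OForces v w' d :=
  fun j c hj hst => (h j c hj hst).mono hv hw

theorem OForces.extend (h : OForces v w d)
    (hm : (d.moves.length + 1) % 2 = 1 → ∀ e, m.statement = .form e → Forces v w e) :
    OForces v w (d.extend m) := by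
  intro j c hj hst
  rcases stmtAt_extend_eq_some.1 hst with hst | ⟨rfl, hc⟩
  exacts [h j c hj hst, hm hj c hc.symm]

structure IsPendingOAttack (v : ℕ → W → Prop) (w : W) (d : Dialogue) (r : ℕ) : Prop where
  odd : r % 2 = 1
  isAttackPos : IsAttackPos d r
  le_of_isAttackPos : ∀ r', r' % 2 = 1 → IsAttackPos d r' → r' ≤ r
  not_isDefenseOf : ∀ j, ¬ IsDefenseOf d j r
  not_forces : ∀ a χ e, d.moveAt r = some a → d.stmtAt a.ref = some (.form χ) →
    Defends χ a.statement (.form e) → ¬ Forces v w e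

namespace IsPendingOAttack

theorem le_length (h : IsPendingOAttack v w d r) : r ≤ d.moves.length :=
  have ⟨_, ha, _⟩ := h.isAttackPos
  (le_length_of_moveAt ha).2

theorem eq_of_isDefenseOf (h : IsPendingOAttack v w d r) (hD11 : D11 (d.extend m))
    (hdef : IsDefenseOf (d.extend m) (d.moves.length + 1) m.ref) (hodd : m.ref % 2 = 1)
    (hatt : IsAttackPos d m.ref) : m.ref = r := by
  refine (h.le_of_isAttackPos _ hodd hatt).eq_or_lt.resolve_right fun hlt => ?_
  refine (hD11 _ _ hdef).2 ⟨r, hlt, by have := h.le_length; omega, by rw [hodd, h.odd], ?_⟩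
  exact (openAt_extend_of_le h.le_length le_rfl).2 ⟨h.isAttackPos, fun ⟨j, _, hj⟩ =>
    h.not_isDefenseOf j hj⟩

theorem extend (hp : ParticleOK d) (h : IsPendingOAttack v w d r)
    (hatt : m.isAttack = true → (d.moves.length + 1) % 2 = 0)
    (hdef : m.isAttack = false → m.ref % 2 = 0) : IsPendingOAttack v w (d.extend m) r := by
  have hr := h.le_length
  have hpos : ∀ {r'}, r' ≤ d.moves.length → (IsAttackPos (d.extend m) r' ↔ IsAttackPos d r') :=
    fun hr' => by simp only [IsAttackPos, moveAt_extend_of_le hr']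
  refine ⟨h.odd, (hpos hr).2 h.isAttackPos, fun r' hr' hatt' => ?_, fun j hj => ?_,
    fun a χ e ha hχ hd => ?_⟩
  · by_cases hr'N : r' ≤ d.moves.length
    · exact h.le_of_isAttackPos r' hr' ((hpos hr'N).1 hatt')
    · obtain ⟨m', hm', hA⟩ := hatt'
      rcases moveAt_extend_eq_some.1 hm' with hm' | ⟨rfl, rfl⟩
      · exact absurd (le_length_of_moveAt hm').2 hr'N
      · exact absurd (hatt hA) (by omega)
  · rcases isDefenseOf_extend.1 hj with hj | ⟨-, hA, rfl⟩
    · exact h.not_isDefenseOf j hj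
    · exact absurd (hdef hA) (by have := h.odd; omega)
  · rw [moveAt_extend_of_le hr] at ha
    rw [stmtAt_extend_of_le ((hp.ref_lt ha).trans_le hr).le] at hχ
    exact h.not_forces a χ e ha hχ hd

theorem extend_attack_length {ψ : Formula} (hp : ParticleOK d)
    (hN : d.moves.length % 2 = 0) (hψ : d.stmtAt d.moves.length = some (.form ψ))
    (hs : ∀ e, Defends ψ s (.form e) → ¬ Forces v w e) :
    IsPendingOAttack v w (d.extend ⟨s, true, d.moves.length⟩) (d.moves.length + 1) := by
  refine ⟨by omega, ⟨_, moveAt_extend_length d _, rfl⟩, fun r' _ ⟨m', hm', _⟩ => ?_,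
    fun j hj => ?_, fun a χ e ha hχ hd => ?_⟩
  · simpa using (le_length_of_moveAt hm').2
  · rcases isDefenseOf_extend.1 hj with hj | ⟨-, hA, -⟩
    · exact absurd (hp.lt_length_of_isDefenseOf hj) (by omega)
    · exact Bool.noConfusion hA
  · obtain rfl := Option.some_injective _ ((moveAt_extend_length d _).symm.trans ha)
    rw [stmtAt_extend_of_le le_rfl, hψ] at hχ
    obtain rfl : ψ = χ := by simpa using hχ
    exact hs e hd

end IsPendingOAttack

inductive CounterStage (v : ℕ → W → Prop) (w : W) (d : Dialogue) : Prop
  | pToMove {r : ℕ} : d.moves.length % 2 = 1 → IsPendingOAttack v w d r → CounterStage v w d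
  | refute {ψ : Formula} : d.moves.length % 2 = 0 →
      d.stmtAt d.moves.length = some (.form ψ) → ¬ Forces v w ψ → CounterStage v w d
  | answer {r : ℕ} : d.moves.length % 2 = 0 → IsAttackPos d d.moves.length →
      IsPendingOAttack v w d r → CounterStage v w d

structure CounterInv (A : Set ℕ) (v : ℕ → W → Prop) (w : W) (d : Dialogue) : Prop where
  legal : Legal rulesetEprime d
  atomsIn : AtomsIn A d
  oForces : OForces v w d
  stage : CounterStage v w d

namespace CounterInv

theorem extend_pMove (hinv : CounterInv A v w d) (hturn : PTurn d)
    (hm : LegalExt rulesetEprime d m) : CounterInv A v w (d.extend m) := by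
  have hN : d.moves.length % 2 = 1 := by simp only [PTurn, nextPos] at hturn; omega
  obtain ⟨r, hr⟩ : ∃ r, IsPendingOAttack v w d r := by
    rcases hinv.stage with ⟨-, hr⟩ | ⟨h, -⟩ | ⟨h, -⟩
    exacts [⟨_, hr⟩, absurd h (by omega), absurd h (by omega)]
  have hO : OForces v w (d.extend m) := hinv.oForces.extend fun h => absurd h (by omega)
  obtain ⟨hlt, hpar, hatt, hdef⟩ := hm.1.moveOK (moveAt_extend_length d m)
  have hodd : m.ref % 2 = 1 := by omega
  cases hA : m.isAttack with
  | true =>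
    obtain ⟨ψ, hψ, hs⟩ := hatt hA
    rw [stmtAt_extend_of_le (by omega)] at hψ
    refine ⟨hm, hinv.atomsIn.extend fun e he => ?_, hO,
      .answer (by rw [length_extend]; omega) ⟨m, by simpa using moveAt_extend_length d m, hA⟩
        (hr.extend hinv.legal.1 (fun _ => by omega) (by simp [hA]))⟩
    rw [he] at hs
    exact fun q hq => hinv.atomsIn _ _ hψ q (hs.atoms_subset q hq)
  | false =>
    obtain ⟨a, χ, ha, haA, hχ, hd⟩ := hdef hA
    rw [moveAt_extend_of_le (by omega)] at ha
    rw [stmtAt_extend_of_le (by have := hinv.legal.1.ref_lt ha; omega)] at hχ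
    have href := hr.eq_of_isDefenseOf hm.2.2.1 ⟨m, moveAt_extend_length d m, hA, rfl⟩ hodd
      ⟨a, ha, haA⟩
    obtain ⟨e, he⟩ := hd.exists_form
    rw [he] at hd
    refine ⟨hm, hinv.atomsIn.extend fun e' he' => ?_, hO,
      .refute (by rw [length_extend]; omega) ?_ (hr.not_forces a χ e (href ▸ ha) hχ hd)⟩
    · obtain rfl : e = e' := by simpa [he] using he'
      exact fun q hq => hinv.atomsIn _ _ hχ q (hd.atoms_subset q hq)
    · simpa [he] using stmtAt_of_moveAt (moveAt_extend_length d m)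

theorem forces_atom (hA : StableOn A v) (hinv : CounterInv A v w d) {n p : ℕ}
    (hn : n % 2 = 0) (hst : d.stmtAt n = some (.form (.atom p))) : Forces v w (.atom p) := by
  obtain ⟨j, -, hj, hst' | hst'⟩ := hinv.legal.2.1 n p hn hst
  · exact hinv.oForces j _ hj hst'
  · exact hA p (hinv.atomsIn j _ hst' p (by simp [Formula.atoms])) w (hinv.oForces j _ hj hst')

theorem exists_oAttack (hv : ∀ p, Monotone (v p)) (hA : StableOn A v)
    (hinv : CounterInv A v w d) {ψ : Formula} (hN : d.moves.length % 2 = 0)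
    (hψ : d.stmtAt d.moves.length = some (.form ψ)) (hnf : ¬ Forces v w ψ) :
    ∃ m, ∃ w' : W, LegalExt rulesetEprime d m ∧ CounterInv A v w' (d.extend m) := by
  by_cases hat : ∃ p, ψ = .atom p
  · obtain ⟨p, rfl⟩ := hat
    exact absurd (hinv.forces_atom hA hN hψ) hnf
  obtain ⟨w', hw', s, hs, hsf, hdef⟩ :=
    exists_attack_of_not_forces (fun p hp => hat ⟨p, hp⟩) hnf
  have hleg := hinv.legal.extend_oMove hN rfl (moveOK_attack_last hψ hs)
  refine ⟨_, w', hleg, hleg, hinv.atomsIn.extend ?_, (hinv.oForces.mono hv hw').extend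
    fun _ => hsf, .pToMove (by rw [length_extend]; omega)
      (IsPendingOAttack.extend_attack_length hinv.legal.1 hN hψ hdef)⟩
  rintro e rfl
  exact fun q hq => hinv.atomsIn _ _ hψ q (hs.atoms_subset q hq)

theorem exists_oDefense (hinv : CounterInv A v w d) (hN : d.moves.length % 2 = 0) {a : Move}
    {χ e : Formula} (ha : d.moveAt d.moves.length = some a) (haA : a.isAttack = true)
    (hχ : d.stmtAt a.ref = some (.form χ)) (hd : Defends χ a.statement (.form e))
    (he : Forces v w e) (hr : IsPendingOAttack v w d r) :
    ∃ m, LegalExt rulesetEprime d m ∧ CounterInv A v w (d.extend m) := by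
  have hleg := hinv.legal.extend_oMove hN rfl (moveOK_defense_last ha haA hχ hd)
  refine ⟨_, hleg, hleg, hinv.atomsIn.extend ?_, hinv.oForces.extend ?_,
    .pToMove (by rw [length_extend]; omega) (hr.extend hinv.legal.1 nofun fun _ => hN)⟩
  · rintro e' ⟨⟩
    exact fun q hq => hinv.atomsIn _ _ hχ q (hd.atoms_subset q hq)
  · rintro - e' ⟨⟩
    exact he

theorem exists_oMove (hv : ∀ p, Monotone (v p)) (hA : StableOn A v)
    (hinv : CounterInv A v w d) (hturn : ¬ PTurn d) :
    ∃ m, ∃ w' : W, LegalExt rulesetEprime d m ∧ CounterInv A v w' (d.extend m) := by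
  have hN : d.moves.length % 2 = 0 := by simp only [PTurn, nextPos] at hturn; omega
  rcases hinv.stage with ⟨h, -⟩ | ⟨-, hψ, hnf⟩ | ⟨-, ⟨a, ha, haA⟩, hr⟩
  · omega
  · exact hinv.exists_oAttack hv hA hN hψ hnf
  · obtain ⟨hlt, hpar, hatt, -⟩ := hinv.legal.1.moveOK ha
    obtain ⟨χ, hχ, hs⟩ := hatt haA
    rcases (hinv.oForces _ _ (by omega) hχ).defends_or_not_forces hs with
      ⟨e, hd, he⟩ | ⟨b, hb, hnf⟩
    · exact (hinv.exists_oDefense hN ha haA hχ hd he hr).imp fun _ h => ⟨w, h⟩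
    · exact hinv.exists_oAttack hv hA hN (hb ▸ stmtAt_of_moveAt ha) hnf

end CounterInv

theorem PWinningC.not_counterInv (hv : ∀ p, Monotone (v p)) (hA : StableOn A v)
    {C : Dialogue → Move → Prop} (hwin : PWinningC rulesetEprime C d) :
    ∀ {w : W}, ¬ CounterInv A v w d := by
  induction hwin with
  | pMove d m hturn hm _ _ ih => exact fun hinv => ih (hinv.extend_pMove hturn hm)
  | oMoves d hturn _ ih =>
    intro w hinv
    obtain ⟨m, w', hm, hinv'⟩ := hinv.exists_oMove hv hA hturn
    exact ih m hm hinv'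

theorem forces_of_valid {φ : Formula} (h : valid rulesetEprime φ) (hv : ∀ p, Monotone (v p))
    (hA : StableOn {q | q ∈ φ.atoms} v) (w : W) : Forces v w φ := by
  by_contra hw
  refine h.2.not_counterInv hv hA
    ⟨h.1, fun j c hst => ?_, fun j c hj hst => ?_, .refute rfl (stmtAt_zero _) hw⟩
  · obtain rfl : j = 0 := by simpa using le_length_of_stmtAt hst
    obtain rfl : φ = c := by simpa using hst
    exact fun _ => id
  · have : j ≤ 0 := le_length_of_stmtAt hst
    omega

end Countermodel

end Dialogues

/-- If φ is E′-valid, then there exist atoms p₁, …, pₙ occurring in φ such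
that ((¬¬p₁ → p₁) ∧ … ∧ (¬¬pₙ → pₙ)) → φ is intuitionistically valid. -/
theorem Eprime_valid_reduces_to_IL (φ : Formula)
    (h : valid rulesetEprime φ) :
    ∃ (p : ℕ) (ps : List ℕ), (∀ q ∈ p :: ps, q ∈ φ.atoms) ∧
      IProv (.imp (stabConj p ps) φ) := by
  obtain ⟨p₀, hp₀⟩ := φ.exists_mem_atoms
  have hforces : ∀ T : CanonicalWorld (stab '' {q | q ∈ φ.atoms}),
      Forces (canonicalVal _) T φ :=
    forces_of_valid h (canonicalVal_monotone _) (stableOn_canonicalVal _)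
  exact (iProvFrom_of_forces_canonical hforces).exists_stabConj hp₀

end LorenzenDialogues
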